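/- Let q > 0 and define L(a) = ∫_1^∞ (v^{2q} − 1)^{−1/2} · sinh(a) · (1 + v² sinh(a)²)^{−1/2} dv for a > 0. Then L(a) < π/(2q) for every a > 0. -/

import Mathlib

/-- The half-height of the r-catenoid with neck radius `a` in `ℍⁿ × ℝ`. -/
noncomputable def catL (q a : ℝ) : ℝ :=
  ∫ v in Set.Ioi (1 : ℝ),
    (v ^ (2 * q) - 1) ^ (-(1 : ℝ) / 2) * Real.sinh a *
      (1 + v ^ 2 * Real.sinh a ^ 2) ^ (-(1 : ℝ) / 2)

/-!
Since `sinh a · v < √(1 + v² sinh² a)`, the integrand of `L(a)` is strictly dominated on `(1, ∞)`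
by `(v^{2q} - 1)^{-1/2} v⁻¹`, whose integral is `π/(2q)`: it is the derivative of
`q⁻¹ arctan √(v^{2q} - 1)`, which vanishes at `1` and tends to `π/(2q)` at infinity.
-/

open MeasureTheory Filter Set Real Topology

lemma rpow_neg_half_eq_inv_sqrt {x : ℝ} (hx : 0 ≤ x) : x ^ (-(1 : ℝ) / 2) = (√x)⁻¹ := by
  rw [sqrt_eq_rpow, ← rpow_neg hx]
  norm_num

lemma mul_rpow_neg_half_lt_inv (s : ℝ) {x : ℝ} (hx : 0 < x) :
    s * (1 + x ^ 2 * s ^ 2) ^ (-(1 : ℝ) / 2) < x⁻¹ := by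
  have hT : 0 < 1 + x ^ 2 * s ^ 2 := by positivity
  have hsx : s * x < √(1 + x ^ 2 * s ^ 2) :=
    calc s * x ≤ |s * x| := le_abs_self _
      _ = √((s * x) ^ 2) := (sqrt_sq_eq_abs _).symm
      _ < √(1 + x ^ 2 * s ^ 2) := sqrt_lt_sqrt (sq_nonneg _) (by nlinarith)
  rw [rpow_neg_half_eq_inv_sqrt hT.le, ← div_eq_mul_inv, div_lt_iff₀ (sqrt_pos.2 hT),
    inv_mul_eq_div, lt_div_iff₀ hx]
  exact hsx

section ArctanPrimitive

variable {p : ℝ}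

lemma hasDerivAt_arctan_sqrt_rpow_sub_one (hp : 0 < p) {x : ℝ} (hx : 1 < x) :
    HasDerivAt (fun v ↦ 2 / p * arctan √(v ^ p - 1)) ((x ^ p - 1) ^ (-(1 : ℝ) / 2) * x⁻¹) x := by
  have hx0 : 0 < x := by linarith
  have hX : 0 < x ^ p - 1 := sub_pos.2 (one_lt_rpow hx hp)
  have h := (((hasDerivAt_rpow_const (Or.inl hx0.ne')).sub_const 1).sqrt hX.ne').arctan
    |>.const_mul (2 / p)
  refine h.congr_deriv ?_
  rw [sq_sqrt hX.le, rpow_neg_half_eq_inv_sqrt hX.le, rpow_sub hx0, rpow_one,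
    add_sub_cancel]
  field_simp

lemma tendsto_arctan_sqrt_rpow_sub_one_atTop (hp : 0 < p) :
    Tendsto (fun v ↦ 2 / p * arctan √(v ^ p - 1)) atTop (𝓝 (π / p)) := by
  have h : Tendsto (fun v : ℝ ↦ √(v ^ p - 1)) atTop atTop :=
    tendsto_sqrt_atTop.comp <| (tendsto_atTop_add_const_right _ (-1) (tendsto_rpow_atTop hp)).congr
      fun _ ↦ (sub_eq_add_neg _ _).symm
  rw [show π / p = 2 / p * (π / 2) by ring]
  exact ((tendsto_nhds_of_tendsto_nhdsWithin tendsto_arctan_atTop).comp h).const_mul (2 / p)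

lemma continuousAt_arctan_sqrt_rpow_sub_one_one :
    ContinuousAt (fun v ↦ 2 / p * arctan √(v ^ p - 1)) 1 :=
  continuousAt_const.mul <| (continuous_arctan.comp continuous_sqrt).continuousAt.comp
    ((continuousAt_rpow_const 1 p (Or.inl one_ne_zero)).sub continuousAt_const)

lemma rpow_sub_one_rpow_neg_half_mul_inv_nonneg (hp : 0 < p) {x : ℝ} (hx : 1 < x) :
    0 ≤ (x ^ p - 1) ^ (-(1 : ℝ) / 2) * x⁻¹ :=
  mul_nonneg (rpow_nonneg (sub_pos.2 (one_lt_rpow hx hp)).le _) (inv_nonneg.2 (by linarith))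

lemma integrableOn_rpow_sub_one_rpow_neg_half_mul_inv (hp : 0 < p) :
    IntegrableOn (fun x ↦ (x ^ p - 1) ^ (-(1 : ℝ) / 2) * x⁻¹) (Ioi (1 : ℝ)) :=
  integrableOn_Ioi_deriv_of_nonneg continuousAt_arctan_sqrt_rpow_sub_one_one.continuousWithinAt
    (fun _ hx ↦ hasDerivAt_arctan_sqrt_rpow_sub_one hp hx)
    (fun _ hx ↦ rpow_sub_one_rpow_neg_half_mul_inv_nonneg hp hx)
    (tendsto_arctan_sqrt_rpow_sub_one_atTop hp)

lemma integral_rpow_sub_one_rpow_neg_half_mul_inv (hp : 0 < p) :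
    ∫ x in Ioi (1 : ℝ), (x ^ p - 1) ^ (-(1 : ℝ) / 2) * x⁻¹ = π / p := by
  rw [integral_Ioi_of_hasDerivAt_of_nonneg
    continuousAt_arctan_sqrt_rpow_sub_one_one.continuousWithinAt
    (fun _ hx ↦ hasDerivAt_arctan_sqrt_rpow_sub_one hp hx)
    (fun _ hx ↦ rpow_sub_one_rpow_neg_half_mul_inv_nonneg hp hx)
    (tendsto_arctan_sqrt_rpow_sub_one_atTop hp)]
  simp

end ArctanPrimitive

lemma setIntegral_lt_setIntegral_of_forall_lt {X : Type*} [MeasurableSpace X] {μ : Measure X}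
    {s : Set X} {f g : X → ℝ} (hs : MeasurableSet s) (hμs : μ s ≠ 0)
    (hf : IntegrableOn f s μ) (hg : IntegrableOn g s μ) (hlt : ∀ x ∈ s, f x < g x) :
    ∫ x in s, f x ∂μ < ∫ x in s, g x ∂μ := by
  have hsupp : Function.support (g - f) ∩ s = s :=
    inter_eq_right.2 fun x hx ↦ (sub_pos.2 (hlt x hx)).ne'
  rw [← sub_pos, ← integral_sub hg hf, ← Pi.sub_def,
    setIntegral_pos_iff_support_of_nonneg_ae _ (hg.sub hf), hsupp]
  · exact pos_iff_ne_zero.2 hμs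
  · filter_upwards [ae_restrict_mem hs] with x hx
    exact (sub_pos.2 (hlt x hx)).le

theorem stmt_9 (q : ℝ) (hq : 0 < q) (a : ℝ) (ha : 0 < a) :
    catL q a < Real.pi / (2 * q) := by
  have hq2 : 0 < 2 * q := by linarith
  set f : ℝ → ℝ := fun v ↦
    (v ^ (2 * q) - 1) ^ (-(1 : ℝ) / 2) * sinh a * (1 + v ^ 2 * sinh a ^ 2) ^ (-(1 : ℝ) / 2)
  set g : ℝ → ℝ := fun v ↦ (v ^ (2 * q) - 1) ^ (-(1 : ℝ) / 2) * v⁻¹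
  have hg := integrableOn_rpow_sub_one_rpow_neg_half_mul_inv hq2
  have hfg : ∀ v ∈ Ioi (1 : ℝ), f v < g v := fun v (hv : 1 < v) ↦ by
    simp only [f, g, mul_assoc]
    exact mul_lt_mul_of_pos_left (mul_rpow_neg_half_lt_inv _ (by linarith))
      (rpow_pos_of_pos (sub_pos.2 (one_lt_rpow hv hq2)) _)
  have hf0 : ∀ v ∈ Ioi (1 : ℝ), 0 ≤ f v := fun v (hv : 1 < v) ↦ by
    have := (sub_pos.2 (one_lt_rpow hv hq2)).le
    have := (sinh_pos_iff.2 ha).le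
    positivity
  have hf : IntegrableOn f (Ioi 1) := by
    refine hg.mono' (by fun_prop) ?_
    filter_upwards [ae_restrict_mem measurableSet_Ioi] with v hv
    rw [norm_of_nonneg (hf0 v hv)]
    exact (hfg v hv).le
  calc catL q a = ∫ v in Ioi 1, f v := rfl
    _ < ∫ v in Ioi 1, g v :=
      setIntegral_lt_setIntegral_of_forall_lt measurableSet_Ioi (by simp) hf hg hfg
    _ = π / (2 * q) := integral_rpow_sub_one_rpow_neg_half_mul_inv hq2
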